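/- There exists an absolute constant c > 0 such that for every natural number N there is a finite convex set A ⊂ ℝ with |A| ≥ N containing a subset B ⊆ A with |B| ≥ c·|A|^{1/2} and |B + B| ≤ 2·|B|. -/

import Mathlib

open scoped Pointwise

/-- A finite set `A ⊆ ℝ` is *convex* if, listing its elements in increasing order,
the consecutive differences form a strictly increasing sequence. -/
def IsConvexSet (A : Finset ℝ) : Prop :=
  ∀ i : ℕ, i + 2 < A.card →
    (A.sort (· ≤ ·)).getD (i + 1) 0 - (A.sort (· ≤ ·)).getD i 0 <
      (A.sort (· ≤ ·)).getD (i + 2) 0 - (A.sort (· ≤ ·)).getD (i + 1) 0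

namespace ConvAux

def Tn : ℕ → ℕ
  | 0 => 0
  | r + 1 => Tn r + (r + 1)

lemma Tn_succ (r : ℕ) : Tn (r + 1) = Tn r + (r + 1) := rfl

lemma le_Tn (r : ℕ) : r ≤ Tn r := by
  induction r with
  | zero => simp [Tn]
  | succ n ih => rw [Tn_succ]; omega

lemma Tn_strictMono : StrictMono Tn := by
  apply strictMono_nat_of_lt_succ
  intro n; rw [Tn_succ]; omega

lemma rf_ex (u : ℕ) : ∃ r, u ≤ Tn r := ⟨u, le_Tn u⟩

def rf (u : ℕ) : ℕ := Nat.find (rf_ex u)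

lemma le_Tn_rf (u : ℕ) : u ≤ Tn (rf u) := Nat.find_spec (rf_ex u)

lemma rf_le {u s : ℕ} (h : u ≤ Tn s) : rf u ≤ s := Nat.find_le h

lemma rf_min {u s : ℕ} (h : s < rf u) : Tn s < u := by
  have := Nat.find_min (rf_ex u) h
  omega

lemma rf_Tn (r : ℕ) : rf (Tn r) = r := by
  refine le_antisymm (rf_le le_rfl) ?_
  by_contra h
  push_neg at h
  have h1 := le_Tn_rf (Tn r)
  have h2 := Tn_strictMono h
  omega

lemma rf_pos {u : ℕ} (h : 0 < u) : 0 < rf u := by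
  by_contra h'
  push_neg at h'
  have h1 := le_Tn_rf u
  have h2 : rf u = 0 := by omega
  rw [h2] at h1
  simp [Tn] at h1
  omega

lemma Tn_rf_pred {u : ℕ} (h : 0 < u) : Tn (rf u - 1) < u := by
  have h1 := rf_pos h
  exact rf_min (by omega)

/-! ### The construction -/

noncomputable def val (m r j : ℕ) : ℝ :=
  ((m - r : ℕ) : ℝ) + (j : ℝ) / (r : ℝ) + ((m : ℝ)⁻¹) ^ 4 * j * ((j : ℝ) - r) / 2

def rr (m i : ℕ) : ℕ := rf (Tn m - i)
def jj (m i : ℕ) : ℕ := Tn (rr m i) - (Tn m - i)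

noncomputable def ff (m i : ℕ) : ℝ := val m (rr m i) (jj m i)

noncomputable def gv (m r j : ℕ) : ℝ :=
  (r : ℝ)⁻¹ + ((m : ℝ)⁻¹) ^ 4 * (2 * (j : ℝ) + 1 - r) / 2

lemma rj_bounds (m i : ℕ) (hi : i < Tn m) :
    1 ≤ rr m i ∧ rr m i ≤ m ∧ jj m i < rr m i := by
  simp only [rr, jj]
  set u := Tn m - i with hu
  have hu1 : 1 ≤ u := by omega
  have hr1 := rf_pos hu1
  have hTu := le_Tn_rf u
  have hpred := Tn_rf_pred hu1
  have hTsucc : Tn (rf u) = Tn (rf u - 1) + rf u := by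
    obtain ⟨s, hs⟩ : ∃ s, rf u = s + 1 := ⟨rf u - 1, by omega⟩
    rw [hs, Tn_succ, Nat.add_sub_cancel]
  have hrm : rf u ≤ m := rf_le (by omega)
  refine ⟨hr1, hrm, by omega⟩

lemma step (m i : ℕ) (hi : i < Tn m) :
    (jj m i + 1 < rr m i ∧ rr m (i + 1) = rr m i ∧ jj m (i + 1) = jj m i + 1) ∨
    (jj m i + 1 = rr m i ∧ rr m (i + 1) = rr m i - 1 ∧ jj m (i + 1) = 0) := by
  simp only [rr, jj]
  set u := Tn m - i with hu
  have hu1 : 1 ≤ u := by omega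
  have hr1 := rf_pos hu1
  have hTu := le_Tn_rf u
  have hpred := Tn_rf_pred hu1
  have hTsucc : Tn (rf u) = Tn (rf u - 1) + rf u := by
    obtain ⟨s, hs⟩ : ∃ s, rf u = s + 1 := ⟨rf u - 1, by omega⟩
    rw [hs, Tn_succ, Nat.add_sub_cancel]
  have hu' : Tn m - (i + 1) = u - 1 := by omega
  rw [hu']
  by_cases hcase : Tn (rf u) - u + 1 < rf u
  · left
    have hr' : rf (u - 1) = rf u := by
      apply le_antisymm
      · exact rf_le (by omega)
      · by_contra hc
        push_neg at hc
        have h3 : Tn (rf (u - 1)) ≤ Tn (rf u - 1) := Tn_strictMono.monotone (by omega)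
        have h4 := le_Tn_rf (u - 1)
        omega
    rw [hr']
    exact ⟨hcase, rfl, by omega⟩
  · right
    have hceq : Tn (rf u) - u + 1 = rf u := by omega
    have hr' : rf (u - 1) = rf u - 1 := by
      rw [show u - 1 = Tn (rf u - 1) by omega, rf_Tn]
    rw [hr']
    exact ⟨hceq, rfl, by omega⟩

lemma ff_gap (m i : ℕ) (hi : i < Tn m) :
    ff m (i + 1) - ff m i = gv m (rr m i) (jj m i) := by
  obtain ⟨hr1, hrm, hjr⟩ := rj_bounds m i hi
  have hrne : ((rr m i : ℕ) : ℝ) ≠ 0 := by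
    have : (0 : ℕ) < rr m i := hr1
    exact_mod_cast this.ne'
  rcases step m i hi with ⟨h1, h2, h3⟩ | ⟨h1, h2, h3⟩
  · rw [ff, ff, h2, h3, val, val, gv]
    push_cast
    field_simp
    ring
  · have hA : ((m - (rr m i - 1) : ℕ) : ℝ) = ((m - rr m i : ℕ) : ℝ) + 1 := by
      have h : m - (rr m i - 1) = m - rr m i + 1 := by omega
      rw [h]; push_cast; ring
    have hjc : (jj m i : ℝ) = (rr m i : ℝ) - 1 := by
      have h : (jj m i : ℝ) + 1 = rr m i := by exact_mod_cast congrArg (Nat.cast (R := ℝ)) h1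
      linarith
    have hc0 : ((rr m i - 1 : ℕ) : ℝ) = (rr m i : ℝ) - 1 := by
      rw [Nat.cast_sub hr1, Nat.cast_one]
    have hrne1 : (rr m i : ℝ) - 1 + 1 ≠ 0 := by
      rw [sub_add_cancel]; exact hrne
    rw [ff, ff, h2, h3, val, val, gv, hA, hc0, hjc]
    push_cast
    by_cases hr2 : rr m i = 1
    · rw [hr2]; norm_num
    · have hrne2 : (rr m i : ℝ) - 1 ≠ 0 := by
        have : (2 : ℕ) ≤ rr m i := by omega
        have : (2 : ℝ) ≤ (rr m i : ℝ) := by exact_mod_cast this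
        intro hc; linarith
      field_simp
      ring

lemma gv_pos {m r j : ℕ} (hr1 : 1 ≤ r) (hrm : r ≤ m) : 0 < gv m r j := by
  have hM : (0 : ℝ) < (m : ℝ) := by exact_mod_cast (by omega : 0 < m)
  have hx : (1 : ℝ) ≤ (r : ℝ) := by exact_mod_cast hr1
  have hxM : (r : ℝ) ≤ (m : ℝ) := by exact_mod_cast hrm
  have hj : (0 : ℝ) ≤ (j : ℝ) := Nat.cast_nonneg j
  have key : 2 * (m : ℝ) ^ 4 * (r : ℝ) * gv m r j
      = 2 * (m : ℝ) ^ 4 + (r : ℝ) * (2 * (j : ℝ) + 1 - r) := by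
    rw [gv]
    field_simp
  have hpos : 0 < 2 * (m : ℝ) ^ 4 * (r : ℝ) * gv m r j := by
    rw [key]; nlinarith [sq_nonneg ((m:ℝ)^2 - (r:ℝ))]
  by_contra hng
  push_neg at hng
  have : 2 * (m : ℝ) ^ 4 * (r : ℝ) * gv m r j ≤ 0 :=
    mul_nonpos_of_nonneg_of_nonpos (by positivity) hng
  linarith

lemma gv_mono_within {m r j : ℕ} (hm : 1 ≤ m) : gv m r j < gv m r (j + 1) := by
  have hM : (0 : ℝ) < (m : ℝ) := by exact_mod_cast hm
  rw [gv, gv]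
  push_cast
  have : (0 : ℝ) < ((m : ℝ)⁻¹) ^ 4 := by positivity
  nlinarith

lemma gv_mono_cross {m r : ℕ} (hr2 : 2 ≤ r) (hrm : r ≤ m) :
    gv m r (r - 1) < gv m (r - 1) 0 := by
  have hM : (0 : ℝ) < (m : ℝ) := by exact_mod_cast (by omega : 0 < m)
  have hx : (2 : ℝ) ≤ (r : ℝ) := by exact_mod_cast hr2
  have hxM : (r : ℝ) ≤ (m : ℝ) := by exact_mod_cast hrm
  have hc1 : ((r - 1 : ℕ) : ℝ) = (r : ℝ) - 1 := by
    rw [Nat.cast_sub (by omega : 1 ≤ r), Nat.cast_one]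
  have hrne : (r : ℝ) ≠ 0 := by linarith
  have hrne1 : (r : ℝ) - 1 ≠ 0 := by intro h; linarith
  have key : 2 * (m : ℝ) ^ 4 * (r : ℝ) * ((r : ℝ) - 1) * (gv m (r - 1) 0 - gv m r (r - 1))
      = 2 * (m : ℝ) ^ 4 - (r : ℝ) * ((r : ℝ) - 1) * (2 * (r : ℝ) - 3) := by
    rw [gv, gv, hc1]
    field_simp
    ring
  have hM2 : (2 : ℝ) ≤ (m : ℝ) := le_trans hx hxM
  have hm4 : (0 : ℝ) < (m : ℝ) ^ 4 := pow_pos hM 4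
  have hm3 : (0 : ℝ) < (m : ℝ) ^ 3 := pow_pos hM 3
  have hprod : (0 : ℝ) < 2 * (m : ℝ) ^ 4 * (r : ℝ) * ((r : ℝ) - 1) :=
    mul_pos (mul_pos (mul_pos (by norm_num : (0:ℝ) < 2) hm4) (by linarith)) (by linarith)
  have p1 : (r : ℝ) * ((r : ℝ) - 1) ≤ (m : ℝ) * (m : ℝ) := by nlinarith
  have q0 : (0 : ℝ) ≤ 2 * (r : ℝ) - 3 := by linarith
  have p2 : (r : ℝ) * ((r : ℝ) - 1) * (2 * (r : ℝ) - 3) ≤ (m : ℝ) * (m : ℝ) * (2 * (m : ℝ)) :=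
    mul_le_mul p1 (by linarith) q0 (by positivity)
  have hpos : 0 < 2 * (m : ℝ) ^ 4 * (r : ℝ) * ((r : ℝ) - 1) * (gv m (r - 1) 0 - gv m r (r - 1)) := by
    rw [key]
    nlinarith [p2, hm3, hM2]
  have hd : 0 < gv m (r - 1) 0 - gv m r (r - 1) := by
    by_contra hng
    push_neg at hng
    have : 2 * (m : ℝ) ^ 4 * (r : ℝ) * ((r : ℝ) - 1) * (gv m (r - 1) 0 - gv m r (r - 1)) ≤ 0 :=
      mul_nonpos_of_nonneg_of_nonpos hprod.le hng
    linarith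
  linarith

lemma gap_mono (m i : ℕ) (h : i + 1 < Tn m) :
    gv m (rr m i) (jj m i) < gv m (rr m (i + 1)) (jj m (i + 1)) := by
  obtain ⟨hr1, hrm, hjr⟩ := rj_bounds m i (by omega)
  obtain ⟨hr1', hrm', hjr'⟩ := rj_bounds m (i + 1) h
  rcases step m i (by omega) with ⟨h1, h2, h3⟩ | ⟨h1, h2, h3⟩
  · rw [h2, h3]
    exact gv_mono_within (by omega)
  · rw [h2, h3]
    have hj : jj m i = rr m i - 1 := by omega
    have hrr2 : 2 ≤ rr m i := by omega
    rw [hj]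
    exact gv_mono_cross hrr2 hrm

lemma ff_lt_succ (m i : ℕ) (hi : i < Tn m) : ff m i < ff m (i + 1) := by
  obtain ⟨hr1, hrm, _⟩ := rj_bounds m i hi
  have := ff_gap m i hi
  have hp := gv_pos (j := jj m i) hr1 hrm
  linarith

lemma ff_strictMonoOn (m : ℕ) : ∀ i j : ℕ, i < j → j ≤ Tn m → ff m i < ff m j := by
  intro i j
  induction j with
  | zero => omega
  | succ j ih =>
    intro hij hj
    rcases Nat.lt_or_ge i j with h | h
    · exact lt_trans (ih h (by omega)) (ff_lt_succ m j (by omega))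
    · have : i = j := by omega
      subst this
      exact ff_lt_succ m i (by omega)

lemma ff_block (m k : ℕ) (hk : k ≤ m) : ff m (Tn m - Tn (m - k)) = k := by
  have h1 : Tn (m - k) ≤ Tn m := Tn_strictMono.monotone (by omega)
  have hu : Tn m - (Tn m - Tn (m - k)) = Tn (m - k) := by omega
  simp only [ff, rr, jj, hu, rf_Tn, Nat.sub_self]
  rw [val, Nat.sub_sub_self hk]
  simp

lemma Tn_le_sq (r : ℕ) : Tn r ≤ r * r := by
  induction r with
  | zero => simp [Tn]
  | succ n ih => rw [Tn_succ]; nlinarith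

noncomputable def LL (m : ℕ) : List ℝ := (List.range (Tn m + 1)).map (ff m)

noncomputable def AA (m : ℕ) : Finset ℝ := (LL m).toFinset

lemma LL_length (m : ℕ) : (LL m).length = Tn m + 1 := by simp [LL]

lemma LL_sorted (m : ℕ) : (LL m).Pairwise (· < ·) := by
  rw [List.pairwise_iff_getElem]
  intro i j hi hj hij
  simp only [LL, List.getElem_map, List.getElem_range]
  simp only [LL, List.length_map, List.length_range] at hi hj
  exact ff_strictMonoOn m i j hij (by omega)

lemma LL_nodup (m : ℕ) : (LL m).Nodup := (LL_sorted m).nodup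

lemma AA_sort (m : ℕ) : (AA m).sort (· ≤ ·) = LL m :=
  (List.toFinset_sort _ (LL_nodup m)).mpr ((LL_sorted m).imp le_of_lt)

lemma AA_card (m : ℕ) : (AA m).card = Tn m + 1 := by
  rw [AA, List.toFinset_card_of_nodup (LL_nodup m), LL_length]

lemma LL_getD (m i : ℕ) (hi : i < Tn m + 1) : (LL m).getD i 0 = ff m i := by
  rw [List.getD_eq_getElem _ _ (by rw [LL_length]; omega)]
  simp [LL]

lemma AA_convex (m : ℕ) : IsConvexSet (AA m) := by
  intro i hi
  rw [AA_card] at hi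
  rw [AA_sort, LL_getD m i (by omega), LL_getD m (i+1) (by omega),
    LL_getD m (i+2) (by omega)]
  have g1 := ff_gap m i (by omega)
  have g2 := ff_gap m (i+1) (by omega)
  have g3 := gap_mono m i (by omega)
  have : i + 1 + 1 = i + 2 := rfl
  rw [this] at g2
  linarith

lemma cast_mem_AA (m k : ℕ) (hk : k ≤ m) : ((k : ℕ) : ℝ) ∈ AA m := by
  rw [AA, List.mem_toFinset, LL, List.mem_map]
  refine ⟨Tn m - Tn (m - k), ?_, ff_block m k hk⟩
  rw [List.mem_range]
  omega

end ConvAux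

/-- There are arbitrarily large convex sets `A ⊆ ℝ` containing a subset `B` of size at least
`c·|A|^{1/2}` with `|B + B| ≤ 2|B|`. -/
theorem convex_set_with_structured_subset :
    ∃ c : ℝ, 0 < c ∧ ∀ N : ℕ, ∃ A : Finset ℝ,
      IsConvexSet A ∧ N ≤ A.card ∧
      ∃ B ⊆ A, c * (A.card : ℝ) ^ (1 / 2 : ℝ) ≤ (B.card : ℝ) ∧
        (B + B).card ≤ 2 * B.card := by
  refine ⟨1, one_pos, fun N => ?_⟩
  set m := N + 2 with hm
  refine ⟨ConvAux.AA m, ConvAux.AA_convex m, ?_, ?_⟩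
  · rw [ConvAux.AA_card]
    have := ConvAux.le_Tn m
    omega
  · set B : Finset ℝ := (Finset.range (m + 1)).image (Nat.cast : ℕ → ℝ) with hB
    have hBcard : B.card = m + 1 := by
      rw [hB, Finset.card_image_of_injective _ Nat.cast_injective, Finset.card_range]
    refine ⟨B, ?_, ?_, ?_⟩
    · intro x hx
      rw [hB, Finset.mem_image] at hx
      obtain ⟨k, hk, rfl⟩ := hx
      exact ConvAux.cast_mem_AA m k (by have := Finset.mem_range.mp hk; omega)
    · rw [hBcard, ConvAux.AA_card, one_mul, ← Real.sqrt_eq_rpow]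
      have h1 : ((ConvAux.Tn m + 1 : ℕ) : ℝ) ≤ ((m : ℝ) + 1) ^ 2 := by
        have h2 := ConvAux.Tn_le_sq m
        have h3 : ((ConvAux.Tn m : ℕ) : ℝ) ≤ (m : ℝ) * m := by exact_mod_cast h2
        rw [Nat.cast_add, Nat.cast_one]
        nlinarith
      calc Real.sqrt ((ConvAux.Tn m + 1 : ℕ) : ℝ) ≤ Real.sqrt (((m : ℝ) + 1) ^ 2) :=
            Real.sqrt_le_sqrt h1
        _ = (m : ℝ) + 1 := Real.sqrt_sq (by positivity)
        _ = ((m + 1 : ℕ) : ℝ) := by push_cast; ring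
    · have hsub : B + B ⊆ (Finset.range (2 * m + 1)).image (Nat.cast : ℕ → ℝ) := by
        intro x hx
        rw [Finset.mem_add] at hx
        obtain ⟨y, hy, z, hz, rfl⟩ := hx
        rw [hB, Finset.mem_image] at hy hz
        obtain ⟨k₁, hk₁, rfl⟩ := hy
        obtain ⟨k₂, hk₂, rfl⟩ := hz
        rw [Finset.mem_image]
        refine ⟨k₁ + k₂, ?_, by push_cast; ring⟩
        rw [Finset.mem_range] at *
        omega
      calc (B + B).card ≤ ((Finset.range (2 * m + 1)).image (Nat.cast : ℕ → ℝ)).card :=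
            Finset.card_le_card hsub
        _ ≤ (Finset.range (2 * m + 1)).card := Finset.card_image_le
        _ = 2 * m + 1 := Finset.card_range _
        _ ≤ 2 * B.card := by rw [hBcard]; omega
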